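/- arXiv:1611.08103 — 3 statements merged into one kernel-verified Lean document; each statement's English description precedes it below -/
import Mathlib

section
/- Let (U,𝒞) be a fuzzy γ-covering approximation space, let 0 ≤ β ≤ α ≤ 1, and let X, Y be fuzzy sets on U. Then FR̄_{(α,β)}(X) ∪ FR̄_{(α,β)}(Y) ⊆ FR̄_{(α,β)}(X ∪ Y) and FR_{(α,β)}(X) ∪ FR_{(α,β)}(Y) ⊆ FR_{(α,β)}(X ∪ Y), where X ∪ Y is the pointwise maximum of X and Y. -/
open Finset

/-- A fuzzy set on `U` is a function valued in `[0,1]`. -/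
def IsFuzzySet {U : Type*} (X : U → ℝ) : Prop := ∀ y, 0 ≤ X y ∧ X y ≤ 1

/-- `C : Fin m → U → ℝ` is a fuzzy `γ`-covering of the finite universe `U`:
a nonempty finite family of fuzzy sets, none identically `0`, whose pointwise
maximum at every point is at least `γ`, where `γ ∈ (0,1]`. -/
def IsFuzzyCover {U : Type*} (m : ℕ) (γ : ℝ) (C : Fin m → U → ℝ) : Prop :=
  0 < m ∧ 0 < γ ∧ γ ≤ 1 ∧ (∀ i, IsFuzzySet (C i)) ∧
    (∀ i, ∃ y, C i y ≠ 0) ∧ ∀ x, ∃ i, γ ≤ C i x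

/-- The fuzzy `γ`-neighborhood of `x`: pointwise minimum of those `C i` with `C i x ≥ γ`. -/
noncomputable def nbhd {U : Type*} {m : ℕ} (γ : ℝ) (C : Fin m → U → ℝ) (x y : U) : ℝ :=
  ⨅ i : {i : Fin m // γ ≤ C i x}, C i.1 y

/-- `Σ_{y∈U} min (X y) (Ñ_x^γ y)`. -/
noncomputable def sApprox {U : Type*} [Fintype U] {m : ℕ} (γ : ℝ) (C : Fin m → U → ℝ)
    (X : U → ℝ) (x : U) : ℝ :=
  ∑ y, min (X y) (nbhd γ C x y)

/-- `Σ_{y∈U} Ñ_x^γ y`. -/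
noncomputable def nSum {U : Type*} [Fintype U] {m : ℕ} (γ : ℝ) (C : Fin m → U → ℝ) (x : U) : ℝ :=
  ∑ y, nbhd γ C x y

/-- `Σ_{y∈U} (Ñ_x^γ y − min (X y) (Ñ_x^γ y))`. -/
noncomputable def tApprox {U : Type*} [Fintype U] {m : ℕ} (γ : ℝ) (C : Fin m → U → ℝ)
    (X : U → ℝ) (x : U) : ℝ :=
  ∑ y, (nbhd γ C x y - min (X y) (nbhd γ C x y))

/-- The conditional probability `P(X | Ñ_x^γ)`. -/
noncomputable def condProb {U : Type*} [Fintype U] {m : ℕ} (γ : ℝ) (C : Fin m → U → ℝ)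
    (X : U → ℝ) (x : U) : ℝ :=
  sApprox γ C X x / nSum γ C x

/-- Probabilistic upper approximation `FR̄_{(α,β)}(X) = {x : P(X|Ñ_x^γ) ≥ β}`. -/
def FRupper {U : Type*} [Fintype U] {m : ℕ} (γ : ℝ) (C : Fin m → U → ℝ)
    (β : ℝ) (X : U → ℝ) : Set U :=
  {x | β ≤ condProb γ C X x}

/-- Probabilistic lower approximation `FR_{(α,β)}(X) = {x : P(X|Ñ_x^γ) ≥ α}`. -/
def FRlower {U : Type*} [Fintype U] {m : ℕ} (γ : ℝ) (C : Fin m → U → ℝ)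
    (α : ℝ) (X : U → ℝ) : Set U :=
  {x | α ≤ condProb γ C X x}

/-- Grade upper approximation `GR̄_k(X) = {x : Σ_y min(X y, Ñ_x^γ y) > k}`. -/
def GRupper {U : Type*} [Fintype U] {m : ℕ} (γ : ℝ) (C : Fin m → U → ℝ)
    (k : ℝ) (X : U → ℝ) : Set U :=
  {x | k < sApprox γ C X x}

/-- Grade lower approximation `GR_k(X) = {x : Σ_y (Ñ_x^γ y − min(X y, Ñ_x^γ y)) ≤ k}`. -/
def GRlower {U : Type*} [Fintype U] {m : ℕ} (γ : ℝ) (C : Fin m → U → ℝ)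
    (k : ℝ) (X : U → ℝ) : Set U :=
  {x | tApprox γ C X x ≤ k}


lemma condProb_mono {U : Type*} [Fintype U] {m : ℕ} {γ : ℝ} {C : Fin m → U → ℝ}
    (hC : ∀ i, IsFuzzySet (C i)) {X Z : U → ℝ} (h : ∀ y, X y ≤ Z y) (x : U) :
    condProb γ C X x ≤ condProb γ C Z x := by
  have hs : sApprox γ C X x ≤ sApprox γ C Z x := by
    apply Finset.sum_le_sum
    intro y _
    exact min_le_min (h y) le_rfl
  have hn : 0 ≤ nSum γ C x := by
    apply Finset.sum_nonneg
    intro y _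
    exact Real.iInf_nonneg fun i => (hC i.1 y).1
  rcases hn.eq_or_lt with h0 | h0
  · simp [condProb, ← h0]
  · exact div_le_div_of_nonneg_right hs h0.le |>.trans_eq rfl

/-- union property of the probabilistic approximations. -/
theorem stmt2 {U : Type*} [Fintype U] [Nonempty U] {m : ℕ} {γ : ℝ} {C : Fin m → U → ℝ}
    (hC : IsFuzzyCover m γ C) {α β : ℝ} (hβ : 0 ≤ β) (hβα : β ≤ α) (hα : α ≤ 1)
    {X Y : U → ℝ} (hX : IsFuzzySet X) (hY : IsFuzzySet Y) :
    FRupper γ C β X ∪ FRupper γ C β Y ⊆ FRupper γ C β (fun y => max (X y) (Y y)) ∧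
      FRlower γ C α X ∪ FRlower γ C α Y ⊆ FRlower γ C α (fun y => max (X y) (Y y)) := by
  constructor <;> rintro x (hx | hx) <;>
    refine le_trans hx (condProb_mono hC.2.2.2.1 (fun y => ?_) x)
  · exact le_max_left _ _
  · exact le_max_right _ _
  · exact le_max_left _ _
  · exact le_max_right _ _
end

section
/- Let (U,𝒞) be a fuzzy γ-covering approximation space, let 0 ≤ β ≤ α ≤ 1, k ∈ ℝ, and let X, Y be fuzzy sets on U with X ⊆ Y (pointwise). Then DR̄^I_{(α,β)∧k}(X) ⊆ DR̄^I_{(α,β)∧k}(Y) and DR^I_{(α,β)∧k}(X) ⊆ DR^I_{(α,β)∧k}(Y). -/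
open Finset

/-- Disjunctive double-quantitative upper approximation `DR̄^I_{(α,β)∧k}(X)`. -/
def DRupperI {U : Type*} [Fintype U] {m : ℕ} (γ : ℝ) (C : Fin m → U → ℝ)
    (β k : ℝ) (X : U → ℝ) : Set U :=
  {x | β ≤ condProb γ C X x ∧ k < sApprox γ C X x}

/-- Disjunctive double-quantitative lower approximation `DR^I_{(α,β)∧k}(X)`. -/
def DRlowerI {U : Type*} [Fintype U] {m : ℕ} (γ : ℝ) (C : Fin m → U → ℝ)
    (α k : ℝ) (X : U → ℝ) : Set U :=
  {x | α ≤ condProb γ C X x ∧ tApprox γ C X x ≤ k}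

/-- Conjunctive double-quantitative upper approximation `DR̄^II_{(α,β)∨k}(X)`. -/
def DRupperII {U : Type*} [Fintype U] {m : ℕ} (γ : ℝ) (C : Fin m → U → ℝ)
    (β k : ℝ) (X : U → ℝ) : Set U :=
  {x | β ≤ condProb γ C X x ∨ k < sApprox γ C X x}

/-- Conjunctive double-quantitative lower approximation `DR^II_{(α,β)∨k}(X)`. -/
def DRlowerII {U : Type*} [Fintype U] {m : ℕ} (γ : ℝ) (C : Fin m → U → ℝ)
    (α k : ℝ) (X : U → ℝ) : Set U :=
  {x | α ≤ condProb γ C X x ∨ tApprox γ C X x ≤ k}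


lemma sApprox_mono {U : Type*} [Fintype U] {m : ℕ} (γ : ℝ) (C : Fin m → U → ℝ)
    {X Y : U → ℝ} (hXY : ∀ y, X y ≤ Y y) (x : U) :
    sApprox γ C X x ≤ sApprox γ C Y x := by
  unfold sApprox
  exact Finset.sum_le_sum fun y _ => min_le_min (hXY y) le_rfl

/-- monotonicity of the disjunctive double-quantitative approximations. -/
theorem stmt11 {U : Type*} [Fintype U] [Nonempty U] {m : ℕ} {γ : ℝ} {C : Fin m → U → ℝ}
    (hC : IsFuzzyCover m γ C) {α β : ℝ} (hβ : 0 ≤ β) (hβα : β ≤ α) (hα : α ≤ 1)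
    (k : ℝ) {X Y : U → ℝ} (hX : IsFuzzySet X) (hY : IsFuzzySet Y) (hXY : ∀ y, X y ≤ Y y) :
    DRupperI γ C β k X ⊆ DRupperI γ C β k Y ∧ DRlowerI γ C α k X ⊆ DRlowerI γ C α k Y := by
  have key : ∀ x : U, sApprox γ C X x ≤ sApprox γ C Y x := sApprox_mono γ C hXY
  have hcond : ∀ x : U, condProb γ C X x ≤ condProb γ C Y x := by
    intro x
    unfold condProb
    rcases lt_trichotomy (nSum γ C x) 0 with h | h | h
    ·
      exfalso
      have : 0 ≤ nSum γ C x := by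
        apply Finset.sum_nonneg
        intro y _
        unfold nbhd
        obtain ⟨i, hi⟩ := hC.2.2.2.2.2 x
        have : Nonempty {i : Fin m // γ ≤ C i x} := ⟨⟨i, hi⟩⟩
        exact le_ciInf fun j => (hC.2.2.2.1 j.1 y).1
      linarith
    · simp [h]
    · gcongr
      exact key x
  refine ⟨fun x hx => ⟨hx.1.trans (hcond x), lt_of_lt_of_le hx.2 (key x)⟩,
    fun x hx => ⟨hx.1.trans (hcond x), le_trans ?_ hx.2⟩⟩
  unfold tApprox
  exact Finset.sum_le_sum fun y _ => by
    have := min_le_min (hXY y) (le_refl (nbhd γ C x y)); linarith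
end

section
/- Let (U,𝒞) be a fuzzy γ-covering approximation space, let 0 ≤ β ≤ α ≤ 1, k ∈ ℝ, and let X, Y be fuzzy sets on U with X ⊆ Y (pointwise). Then DR̄^II_{(α,β)∨k}(X) ⊆ DR̄^II_{(α,β)∨k}(Y) and DR^II_{(α,β)∨k}(X) ⊆ DR^II_{(α,β)∨k}(Y). -/
open Finset

/-- monotonicity of the conjunctive double-quantitative approximations. -/
theorem stmt13 {U : Type*} [Fintype U] [Nonempty U] {m : ℕ} {γ : ℝ} {C : Fin m → U → ℝ}
    (hC : IsFuzzyCover m γ C) {α β : ℝ} (hβ : 0 ≤ β) (hβα : β ≤ α) (hα : α ≤ 1)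
    (k : ℝ) {X Y : U → ℝ} (hX : IsFuzzySet X) (hY : IsFuzzySet Y) (hXY : ∀ y, X y ≤ Y y) :
    DRupperII γ C β k X ⊆ DRupperII γ C β k Y ∧
      DRlowerII γ C α k X ⊆ DRlowerII γ C α k Y := by
  obtain ⟨hm, hγ, hγ1, hfz, hne, hcov⟩ := hC
  have hnb : ∀ x y, 0 ≤ nbhd γ C x y := fun x y =>
    Real.iInf_nonneg fun i => (hfz i.1 y).1
  have hs : ∀ x, sApprox γ C X x ≤ sApprox γ C Y x := fun x =>
    Finset.sum_le_sum fun y _ => min_le_min (hXY y) le_rfl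
  have ht : ∀ x, tApprox γ C Y x ≤ tApprox γ C X x := fun x =>
    Finset.sum_le_sum fun y _ => by
      have := min_le_min (hXY y) (le_refl (nbhd γ C x y)); linarith
  have hcp : ∀ x, condProb γ C X x ≤ condProb γ C Y x := by
    intro x
    have hn : 0 ≤ nSum γ C x := Finset.sum_nonneg fun y _ => hnb x y
    rcases hn.eq_or_lt with h | h
    · simp [condProb, ← h]
    · exact by exact div_le_div_of_nonneg_right (hs x) h.le
  constructor
  · intro x hx
    rcases hx with h | h
    · exact Or.inl (h.trans (hcp x))
    · exact Or.inr (h.trans_le (hs x))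
  · intro x hx
    rcases hx with h | h
    · exact Or.inl (h.trans (hcp x))
    · exact Or.inr ((ht x).trans h)
end
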